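/- Let S be a family of finite sets over a ground set of size n, pairwise comparable under inclusion, each of size at least n−k, where k ≤ n−1. If n−k ≥ 2, then the minimum set of the chain is shared: every element (process index) appearing in the minimum set 'witnesses' the same minimum set. Consequently, in any subfamily obtained by selecting the sets of n−1 of the n processes (each process contributing at most one set, with at most one process's set missing), the minimum set of the whole family appears in the subfamily provided the family satisfies Immediacy and Self-inclusion. -/

import Mathlib

/-!
A process `i` whose index occurs in the minimum view sees its own entry in `minView`, so by
Immediacy its view is contained in `minView`, hence equals it. Since each process occurs at most
once in `minView`, at least `n - k ≥ 2` processes occur there and all of them return `minView`;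
a set of `n - 1` processes misses at most one of them.
-/

open Finset

theorem Finset.card_image_fst_of_functional {α β : Type*} [DecidableEq α] {s : Finset (α × β)}
    (h : ∀ a b b', (a, b) ∈ s → (a, b') ∈ s → b = b') : #(s.image Prod.fst) = #s :=
  card_image_of_injOn <| by
    rintro ⟨a, b⟩ hb ⟨_, b'⟩ hb' (rfl : a = _)
    rw [h a b b' hb hb']

theorem Finset.exists_mem_mem_of_card_pred_le {n : ℕ} {s t : Finset (Fin n)}
    (hs : 2 ≤ #s) (ht : n - 1 ≤ #t) : ∃ i ∈ s, i ∈ t := by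
  have hcard : #(univ : Finset (Fin n)) < #s + #t := by
    rw [card_univ, Fintype.card_fin]
    omega
  obtain ⟨i, hi⟩ := inter_nonempty_of_card_lt_card_add_card (subset_univ s) (subset_univ t) hcard
  exact ⟨i, mem_of_mem_inter_left hi, mem_of_mem_inter_right hi⟩

theorem kIS_min_view_shared_general
    (n k : ℕ) (Val : Type)
    (hnk : 2 ≤ n - k)
    (views : Fin n → Option (Finset (Fin n × Val)))
    (minView : Finset (Fin n × Val))
    (hret : ∃ i₀, views i₀ = some minView)
    (hmin : ∀ i w, views i = some w → minView ⊆ w)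
    (himm : ∀ i j vi vj, views i = some vi → views j = some vj →
      (∃ v, (i, v) ∈ vj) → vi ⊆ vj)
    (hsize : ∀ i w, views i = some w → n - k ≤ w.card)
    (huniq : ∀ i v v', (i, v) ∈ minView → (i, v') ∈ minView → v = v') :
    (∀ i, (∃ v, (i, v) ∈ minView) → ∀ w, views i = some w → w = minView) ∧
    (∀ T : Finset (Fin n), n - 1 ≤ T.card → (∀ i ∈ T, (views i).isSome) →
      ∃ i ∈ T, views i = some minView) := by
  obtain ⟨i₀, hi₀⟩ := hret
  have shared : ∀ i, (∃ v, (i, v) ∈ minView) → ∀ w, views i = some w → w = minView :=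
    fun i hi w hw => (himm i i₀ w minView hw hi₀ hi).antisymm (hmin i w hw)
  refine ⟨shared, fun T hT hsome => ?_⟩
  have two_le_occurring : 2 ≤ #(minView.image Prod.fst) := by
    rw [card_image_fst_of_functional huniq]
    exact hnk.trans (hsize i₀ minView hi₀)
  obtain ⟨i, hi, hiT⟩ := exists_mem_mem_of_card_pred_le two_le_occurring hT
  obtain ⟨⟨_, v⟩, hv, rfl⟩ := mem_image.mp hi
  obtain ⟨w, hw⟩ := Option.isSome_iff_exists.mp (hsome _ hiT)
  exact ⟨_, hiT, by rw [hw, shared _ ⟨v, hv⟩ w hw]⟩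

/-- the minimum view of a k-IS family with n-k ≥ 2 is shared:
every process whose index appears in `min_view` and returns, returns exactly
`min_view`; consequently any subfamily of views contributed by n-1 of the n
processes contains `min_view`. -/
theorem kIS_min_view_shared
    (n k : ℕ) (Val : Type) [DecidableEq Val]
    (hnk : 2 ≤ n - k)
    (views : Fin n → Option (Finset (Fin n × Val)))
    (minView : Finset (Fin n × Val))
    (hret : ∃ i₀, views i₀ = some minView)
    (hmin : ∀ i w, views i = some w → minView ⊆ w)
    (hself : ∀ i vi, views i = some vi → ∃ v, (i, v) ∈ vi)
    (hcont : ∀ i j vi vj, views i = some vi → views j = some vj →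
      vi ⊆ vj ∨ vj ⊆ vi)
    (himm : ∀ i j vi vj, views i = some vi → views j = some vj →
      (∃ v, (i, v) ∈ vj) → vi ⊆ vj)
    (hsize : ∀ i w, views i = some w → n - k ≤ w.card)
    (huniq : ∀ i v v', (i, v) ∈ minView → (i, v') ∈ minView → v = v') :
    (∀ i, (∃ v, (i, v) ∈ minView) → ∀ w, views i = some w → w = minView) ∧
    (∀ T : Finset (Fin n), n - 1 ≤ T.card → (∀ i ∈ T, (views i).isSome) →
      ∃ i ∈ T, views i = some minView) :=
  kIS_min_view_shared_general n k Val hnk views minView hret hmin himm hsize huniq
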